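/- arXiv:2301.03236 — 3 statements merged into one kernel-verified Lean document; each statement's English description precedes it below -/
import Mathlib

section
/- (Corollary 9, error-corrected BMG form of optimistic meta-updates.) In the setting of Lemma 8, choose the hints as g̃_{t+1} = Dφ(x̄_{t−1}, w_t)^T ỹ_{t+1} for some vectors ỹ_{t+1} ∈ ℝ^n, where g_t = Dφ(x̄_{t−1}, w_t)^T ∇f(x̄_t). Then the interior AO-FTRL iterates satisfy w_{t+1} = (β_t/β_{t−1}) w_t − β_t Dφ(x̄_{t−1}, w_t)^T ( α_{t+1} ỹ_{t+1} + α_t ∇f(x̄_t) ) + β_t α_t Dφ(x̄_{t−2}, w_{t−1})^T ỹ_t, i.e., a Bootstrapped Meta-Gradient update plus an FTRL error-correction term. -/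
open Finset
open scoped InnerProductSpace

private lemma quad_min {m : ℕ} (a v : EuclideanSpace ℝ (Fin m)) (b : ℝ) (hb : 0 < b)
    (h : ∀ u : EuclideanSpace ℝ (Fin m),
      ⟪a, v⟫_ℝ + ‖v‖ ^ 2 / (2 * b) ≤ ⟪a, u⟫_ℝ + ‖u‖ ^ 2 / (2 * b)) :
    v = -b • a := by
  have h1 := h (-b • a)
  have e1 : ⟪a, -b • a⟫_ℝ = -b * ‖a‖ ^ 2 := by
    rw [real_inner_smul_right, real_inner_self_eq_norm_sq]
  have e3 : ‖v + b • a‖ ^ 2 = ‖v‖ ^ 2 + 2 * (b * ⟪a, v⟫_ℝ) + b ^ 2 * ‖a‖ ^ 2 := by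
    rw [norm_add_sq_real, norm_smul, real_inner_smul_right, real_inner_comm]
    rw [mul_pow]
    simp [abs_of_pos hb]
    try ring
  have e2 : ‖(-b : ℝ) • a‖ ^ 2 = b ^ 2 * ‖a‖ ^ 2 := by
    rw [norm_smul, mul_pow]
    simp
  rw [e1, e2] at h1
  have hbne : (2 * b) ≠ 0 := by positivity
  have h1'' := mul_le_mul_of_nonneg_right h1 (by linarith : (0:ℝ) ≤ 2 * b)
  rw [add_mul, add_mul, div_mul_cancel₀ _ hbne, div_mul_cancel₀ _ hbne] at h1''
  have key : ‖v + b • a‖ ^ 2 ≤ 0 := by rw [e3]; nlinarith [h1'']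
  have hn : ‖v + b • a‖ = 0 := by nlinarith [norm_nonneg (v + b • a), sq_nonneg ‖v + b • a‖]
  have hz : v + b • a = 0 := norm_eq_zero.mp hn
  have : v = -(b • a) := by linear_combination (norm := module) hz
  simpa [neg_smul] using this

/-- Corollary 9: with hints `g̃_{t+1} = Dφ(x̄_{t-1}, w_t)ᵀ ỹ_{t+1}`, the interior
AO-FTRL meta-updates take the form of a Bootstrapped Meta-Gradient update plus an
FTRL error-correction term. -/
theorem aoftrl_is_error_corrected_bmg
    {n m : ℕ} (T : ℕ)
    (f : EuclideanSpace ℝ (Fin n) → ℝ) (hfd : Differentiable ℝ f)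
    (φ : EuclideanSpace ℝ (Fin n) → EuclideanSpace ℝ (Fin m) → EuclideanSpace ℝ (Fin n))
    (Dφ : EuclideanSpace ℝ (Fin n) → EuclideanSpace ℝ (Fin m) →
      EuclideanSpace ℝ (Fin m) →L[ℝ] EuclideanSpace ℝ (Fin n))
    (hDφ : ∀ a u, HasFDerivAt (φ a) (Dφ a u) u)
    (xbar : ℕ → EuclideanSpace ℝ (Fin n))
    (yh : ℕ → EuclideanSpace ℝ (Fin n))
    (α : ℕ → ℝ) (hα : ∀ t, 1 ≤ t → 0 < α t)
    (β : ℕ → ℝ) (hβ : ∀ t, 0 < β t)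
    (w : ℕ → EuclideanSpace ℝ (Fin m))
    (g gh : ℕ → EuclideanSpace ℝ (Fin m))
    -- linearized meta-losses
    (hg : ∀ t, 1 ≤ t → t ≤ T →
      g t = (ContinuousLinearMap.adjoint (Dφ (xbar (t - 1)) (w t))) (gradient f (xbar t)))
    -- hints induced by the targets `ỹ`
    (hgh : ∀ t, 1 ≤ t → t ≤ T →
      gh (t + 1) = (ContinuousLinearMap.adjoint (Dφ (xbar (t - 1)) (w t))) (yh (t + 1)))
    -- AO-FTRL meta-update over ℝ^m with Euclidean regularizer
    (hw : ∀ t, t ≤ T →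
      IsMinOn (fun u : EuclideanSpace ℝ (Fin m) =>
          α (t + 1) * ⟪gh (t + 1), u⟫_ℝ + (∑ s ∈ Finset.Icc 1 t, α s * ⟪g s, u⟫_ℝ)
            + ‖u‖ ^ 2 / (2 * β t))
        Set.univ (w (t + 1))) :
    ∀ t, 2 ≤ t → t ≤ T →
      w (t + 1) = (β t / β (t - 1)) • w t
        - β t • (ContinuousLinearMap.adjoint (Dφ (xbar (t - 1)) (w t)))
            (α (t + 1) • yh (t + 1) + α t • gradient f (xbar t))
        + (β t * α t) • (ContinuousLinearMap.adjoint (Dφ (xbar (t - 2)) (w (t - 1)))) (yh t) := by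
  -- closed form for the minimizer
  have hform : ∀ t, t ≤ T →
      w (t + 1) = -(β t) • (α (t + 1) • gh (t + 1) + ∑ s ∈ Finset.Icc 1 t, α s • g s) := by
    intro t ht
    set a := α (t + 1) • gh (t + 1) + ∑ s ∈ Finset.Icc 1 t, α s • g s with ha
    have hobj : ∀ u : EuclideanSpace ℝ (Fin m),
        α (t + 1) * ⟪gh (t + 1), u⟫_ℝ + (∑ s ∈ Finset.Icc 1 t, α s * ⟪g s, u⟫_ℝ)
          + ‖u‖ ^ 2 / (2 * β t) = ⟪a, u⟫_ℝ + ‖u‖ ^ 2 / (2 * β t) := by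
      intro u
      rw [ha, inner_add_left, sum_inner, real_inner_smul_left]
      congr 2
      exact Finset.sum_congr rfl fun s _ => (real_inner_smul_left _ _ _).symm
    have hmin := isMinOn_iff.mp (hw t ht)
    refine quad_min a (w (t+1)) (β t) (hβ t) ?_
    intro u
    have := hmin u (Set.mem_univ u)
    rw [hobj, hobj] at this
    exact this
  intro t ht2 htT
  obtain ⟨u, rfl⟩ : ∃ u, t = u + 2 := ⟨t - 2, by omega⟩
  simp only [show u + 2 - 1 = u + 1 from rfl, show u + 2 - 2 = u from rfl]
  have h1 := hform (u + 2) htT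
  have h2 := hform (u + 1) (by omega)
  have hsum : (∑ s ∈ Finset.Icc 1 (u + 2), α s • g s)
      = (∑ s ∈ Finset.Icc 1 (u + 1), α s • g s) + α (u + 2) • g (u + 2) := by
    exact Finset.sum_Icc_succ_top (by omega) _
  have hgt := hg (u + 2) (by omega) htT
  have hght1 := hgh (u + 2) (by omega) htT
  have hght := hgh (u + 1) (by omega) (by omega)
  simp only [show u + 2 - 1 = u + 1 from rfl, show u + 1 - 1 = u from rfl,
    show u + 1 + 1 = u + 2 from rfl] at hgt hght1 hght h2
  have hβne : β (u + 1) ≠ 0 := ne_of_gt (hβ (u + 1))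
  rw [h1, hsum, hgt, hght1, h2, hght]
  simp only [map_add, map_smul]
  match_scalars <;> field_simp <;> ring
end

section
/- (Theorem 10, direction BMG → AO-FTRL.) Let μ : ℝ^n → ℝ be convex and differentiable, and let z_1, …, z_T ∈ ℝ^n be arbitrary BMG targets. Define hints recursively by g̃_1 = 0 and α_{t+1} g̃_{t+1} = Dφ(x̄_{t−1}, w_t)^T ( ∇μ(x̄_t) − ∇μ(z_t) − α_t ∇f(x̄_t) ) + α_t g̃_t for t = 1, …, T. Then the interior AO-FTRL iterates w_{t+1} = −β_t ( α_{t+1} g̃_{t+1} + Σ_{s=1}^t α_s Dφ(x̄_{s−1}, w_s)^T ∇f(x̄_s) ) satisfy, for every t, w_{t+1} = (β_t/β_{t−1}) w_t − β_t Dφ(x̄_{t−1}, w_t)^T ( ∇μ(x̄_t) − ∇μ(z_t) ), i.e., a (scaled) Bootstrapped Meta-Gradient update with Bregman matching function B^μ. -/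
open Finset
open scoped InnerProductSpace

/-- Theorem 10 (BMG → AO-FTRL): given arbitrary BMG targets `z_t` and hints defined
recursively by `g̃_1 = 0` and
`α_{t+1} g̃_{t+1} = Dφ(x̄_{t-1}, w_t)ᵀ(∇μ(x̄_t) - ∇μ(z_t) - α_t ∇f(x̄_t)) + α_t g̃_t`,
the interior AO-FTRL iterates perform (scaled) Bootstrapped Meta-Gradient updates
with Bregman matching function `B^μ`. -/
theorem bmg_targets_induce_aoftrl_hints
    {n m : ℕ} (T : ℕ)
    (f : EuclideanSpace ℝ (Fin n) → ℝ) (hfd : Differentiable ℝ f)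
    (μ : EuclideanSpace ℝ (Fin n) → ℝ)
    (hμcv : ConvexOn ℝ Set.univ μ) (hμd : Differentiable ℝ μ)
    (φ : EuclideanSpace ℝ (Fin n) → EuclideanSpace ℝ (Fin m) → EuclideanSpace ℝ (Fin n))
    (Dφ : EuclideanSpace ℝ (Fin n) → EuclideanSpace ℝ (Fin m) →
      EuclideanSpace ℝ (Fin m) →L[ℝ] EuclideanSpace ℝ (Fin n))
    (hDφ : ∀ a u, HasFDerivAt (φ a) (Dφ a u) u)
    (xbar : ℕ → EuclideanSpace ℝ (Fin n))
    -- arbitrary BMG targets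
    (z : ℕ → EuclideanSpace ℝ (Fin n))
    (α : ℕ → ℝ) (hα : ∀ t, 1 ≤ t → 0 < α t)
    (β : ℕ → ℝ) (hβ : ∀ t, 0 < β t)
    (w : ℕ → EuclideanSpace ℝ (Fin m))
    (gh : ℕ → EuclideanSpace ℝ (Fin m))
    -- recursively defined hints
    (hgh1 : gh 1 = 0)
    (hgh : ∀ t, 1 ≤ t → t ≤ T →
      α (t + 1) • gh (t + 1)
        = (ContinuousLinearMap.adjoint (Dφ (xbar (t - 1)) (w t)))
            (gradient μ (xbar t) - gradient μ (z t) - α t • gradient f (xbar t))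
          + α t • gh t)
    -- interior AO-FTRL iterates
    (hw : ∀ t, t ≤ T →
      w (t + 1) = -β t • (α (t + 1) • gh (t + 1)
        + ∑ s ∈ Finset.Icc 1 t,
            α s • (ContinuousLinearMap.adjoint (Dφ (xbar (s - 1)) (w s)))
              (gradient f (xbar s)))) :
    ∀ t, 1 ≤ t → t ≤ T →
      w (t + 1) = (β t / β (t - 1)) • w t
        - β t • (ContinuousLinearMap.adjoint (Dφ (xbar (t - 1)) (w t)))
            (gradient μ (xbar t) - gradient μ (z t)) := by
  intro t ht hT
  cases t with
  | zero => omega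
  | succ k =>
    have hk : k ≤ T := by omega
    have h1 := hw (k + 1) hT
    have h2 := hw k hk
    have h3 := hgh (k + 1) (by omega) hT
    simp only [Nat.add_sub_cancel] at h3 ⊢
    rw [Finset.sum_Icc_succ_top (by omega : 1 ≤ k + 1)] at h1
    simp only [Nat.add_sub_cancel] at h1
    set A := ContinuousLinearMap.adjoint (Dφ (xbar k) (w (k + 1))) with hA
    set S := ∑ s ∈ Finset.Icc 1 k,
      α s • (ContinuousLinearMap.adjoint (Dφ (xbar (s - 1)) (w s))) (gradient f (xbar s)) with hS
    have hβk : β k ≠ 0 := (hβ k).ne'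
    rw [h1, h3, map_sub, map_sub, map_smul, h2]
    match_scalars <;> field_simp <;> ring
end

section
/- (Theorem 10, direction AO-FTRL → BMG.) Let μ : ℝ^n → ℝ be strictly convex and differentiable so that ∇μ is invertible, and let ỹ_1, …, ỹ_{T+1} ∈ ℝ^n be given. Define BMG targets recursively by z_t = (∇μ)^{−1} ( ∇μ(x_t) − ( α_{t+1} ỹ_{t+1} + α_t ∇f(x_t) ) ) for t = 1, …, T. Then the BMG meta-updates w_{t+1} = w_t − β_t Dφ(x_{t−1}, w_t)^T ( ∇μ(x_t) − ∇μ(z_t) ) satisfy, for every t, w_{t+1} = w_t − β_t ( α_{t+1} g̃_{t+1} + α_t ( Dφ(x_{t−1}, w_t)^T ∇f(x_t) − g̃_t ) ), where the BMG-induced hints g̃_t are defined recursively by α_{t+1} g̃_{t+1} = α_{t+1} Dφ(x_{t−1}, w_t)^T ỹ_{t+1} + α_t g̃_t (with g̃_1 arbitrary). -/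
open Finset
open scoped InnerProductSpace

/-- Theorem 10 (AO-FTRL → BMG): for strictly convex `μ`, targets defined by
`∇μ(z_t) = ∇μ(x_t) - (α_{t+1} ỹ_{t+1} + α_t ∇f(x_t))` turn the BMG meta-updates
into optimistic (AO-FTRL-style) updates with the BMG-induced hints `g̃_t` defined
recursively by `α_{t+1} g̃_{t+1} = α_{t+1} Dφ(x_{t-1}, w_t)ᵀ ỹ_{t+1} + α_t g̃_t`. -/
theorem aoftrl_hints_induce_bmg_targets
    {n m : ℕ} (T : ℕ)
    (f : EuclideanSpace ℝ (Fin n) → ℝ) (hfd : Differentiable ℝ f)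
    (μ : EuclideanSpace ℝ (Fin n) → ℝ)
    (hμcv : StrictConvexOn ℝ Set.univ μ) (hμd : Differentiable ℝ μ)
    (φ : EuclideanSpace ℝ (Fin n) → EuclideanSpace ℝ (Fin m) → EuclideanSpace ℝ (Fin n))
    (Dφ : EuclideanSpace ℝ (Fin n) → EuclideanSpace ℝ (Fin m) →
      EuclideanSpace ℝ (Fin m) →L[ℝ] EuclideanSpace ℝ (Fin n))
    (hDφ : ∀ a u, HasFDerivAt (φ a) (Dφ a u) u)
    (α : ℕ → ℝ) (hα : ∀ t, 1 ≤ t → 0 < α t)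
    (β : ℕ → ℝ) (hβ : ∀ t, 1 ≤ t → 0 < β t)
    (x : ℕ → EuclideanSpace ℝ (Fin n)) (w : ℕ → EuclideanSpace ℝ (Fin m))
    (yh : ℕ → EuclideanSpace ℝ (Fin n))
    (z : ℕ → EuclideanSpace ℝ (Fin n))
    (gh : ℕ → EuclideanSpace ℝ (Fin m))
    -- learner's iterates
    (hx : ∀ t, 1 ≤ t → t ≤ T → x t = x (t - 1) + φ (x (t - 1)) (w t))
    -- targets: `z_t = (∇μ)⁻¹(∇μ(x_t) - (α_{t+1} ỹ_{t+1} + α_t ∇f(x_t)))`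
    (hz : ∀ t, 1 ≤ t → t ≤ T →
      gradient μ (z t)
        = gradient μ (x t) - (α (t + 1) • yh (t + 1) + α t • gradient f (x t)))
    -- BMG meta-updates
    (hw : ∀ t, 1 ≤ t → t ≤ T →
      w (t + 1) = w t - β t • (ContinuousLinearMap.adjoint (Dφ (x (t - 1)) (w t)))
        (gradient μ (x t) - gradient μ (z t)))
    -- BMG-induced hints (`g̃_1` arbitrary)
    (hgh : ∀ t, 1 ≤ t → t ≤ T →
      α (t + 1) • gh (t + 1)
        = α (t + 1) • (ContinuousLinearMap.adjoint (Dφ (x (t - 1)) (w t))) (yh (t + 1))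
          + α t • gh t) :
    ∀ t, 1 ≤ t → t ≤ T →
      w (t + 1) = w t - β t • (α (t + 1) • gh (t + 1)
        + α t • ((ContinuousLinearMap.adjoint (Dφ (x (t - 1)) (w t))) (gradient f (x t))
            - gh t)) := by
  intro t h1 h2
  rw [hw t h1 h2, hz t h1 h2]
  congr 1
  congr 1
  have : gradient μ (x t) - (gradient μ (x t)
      - (α (t + 1) • yh (t + 1) + α t • gradient f (x t)))
      = α (t + 1) • yh (t + 1) + α t • gradient f (x t) := by abel
  rw [this, map_add, map_smul, map_smul, hgh t h1 h2]
  module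
end
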